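/- Let w ∈ W, s ∈ S with sw < w, and x ∈ W with x < w. Then the Kazhdan–Lusztig polynomials satisfy: h_{x,w} = v h_{x,sw} + h_{sx,sw} − Σ_{sz < z < sw} μ(z,sw) h_{x,z} if x < sx, and h_{x,w} = v⁻¹ h_{x,sw} + h_{sx,sw} − Σ_{sz < z < sw} μ(z,sw) h_{x,z} if x > sx. -/

import Mathlib

/-!
Write `H̱_s = H_s + v`. Left multiplication by `H̱_s` sends the `H_y`-coordinate of `a` to
`v^{±1} a_y + a_{sy}`, with `v` if `y < sy` and `v⁻¹` if `sy < y`, and `H̱_s` is bar-invariant.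
Hence `X = H̱_s H̱_{sw} - Σ_{sz<z<sw} μ(z,sw) H̱_z` is bar-invariant, and its coordinates agree
with those of `H̱_w` in all degrees `≤ 0`: the only constant terms not already matched are the
`μ(y,sw)` produced by `v⁻¹ h_{y,sw}` for `sy < y`, and the subtracted sum removes exactly these.
A bar-invariant element whose coordinates all lie in `vℤ[v]` is zero: at a length-maximal term
of its expansion in the Kazhdan–Lusztig basis, the coefficient equals the standard coordinate, so
it is both bar-invariant and in `vℤ[v]`. Thus `X = H̱_w`, and its `x`-coordinate is the formula.
-/

open LaurentPolynomial

/-- The Bruhat order on a Coxeter group, defined via the subword property. -/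
def CoxeterSystem.bruhatLE {B W : Type} [Group W] {M : CoxeterMatrix B}
    (cs : CoxeterSystem M W) (x w : W) : Prop :=
  ∃ ω : List B, cs.IsReduced ω ∧ cs.wordProd ω = w ∧
    ∃ φ : List B, φ.Sublist ω ∧ cs.IsReduced φ ∧ cs.wordProd φ = x

def CoxeterSystem.bruhatLT {B W : Type} [Group W] {M : CoxeterMatrix B}
    (cs : CoxeterSystem M W) (x w : W) : Prop :=
  cs.bruhatLE x w ∧ x ≠ w

namespace CoxeterSystem

variable {B W : Type} [Group W] {M : CoxeterMatrix B} (cs : CoxeterSystem M W)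

theorem length_lt_of_bruhatLT {x w : W} (h : cs.bruhatLT x w) : cs.length x < cs.length w := by
  obtain ⟨⟨ω, hω, rfl, φ, hsub, hφ, rfl⟩, hne⟩ := h
  rw [hω, hφ]
  refine lt_of_le_of_ne hsub.length_le fun hlen => hne ?_
  rw [hsub.eq_of_length hlen]

theorem bruhatLT_simple_mul_self_iff {x : W} {i : B} :
    cs.bruhatLT (cs.simple i * x) x ↔ cs.IsLeftDescent x i := by
  refine ⟨cs.length_lt_of_bruhatLT, fun hx => ?_⟩
  obtain ⟨φ, hφ, hφx⟩ := cs.exists_isReduced (cs.simple i * x)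
  have hx' : cs.wordProd (i :: φ) = x := by
    rw [wordProd_cons, ← hφx, simple_mul_simple_cancel_left]
  refine ⟨⟨i :: φ, ?_, hx', φ, List.sublist_cons_self i φ, hφ, hφx.symm⟩, ?_⟩
  · have := cs.isLeftDescent_iff.mp hx
    rw [IsReduced, hx', List.length_cons, ← hφ, ← hφx, this]
  · intro h
    exact (cs.length_simple_mul_ne x i) (by rw [h])

theorem bruhatLT_self_simple_mul_iff {x : W} {i : B} :
    cs.bruhatLT x (cs.simple i * x) ↔ ¬cs.IsLeftDescent x i := by
  have h := cs.bruhatLT_simple_mul_self_iff (x := cs.simple i * x) (i := i)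
  rwa [simple_mul_simple_cancel_left, isLeftDescent_iff_not_isLeftDescent_mul,
    simple_mul_simple_cancel_left] at h

end CoxeterSystem

namespace LaurentPolynomial

theorem coeff_T_mul {R : Type*} [Semiring R] (m n : ℤ) (p : R[T;T⁻¹]) :
    (T m * p).coeff n = p.coeff (n - m) := by
  rw [T, AddMonoidAlgebra.coeff_single_mul_apply, one_mul]
  congr 1; abel

theorem eq_zero_of_invert_eq_self {R : Type*} [CommSemiring R] {p : R[T;T⁻¹]}
    (hinv : invert p = p) (hpos : ∀ n ≤ 0, p.coeff n = 0) : p = 0 := by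
  ext n
  rcases le_or_gt n 0 with hn | hn
  · exact hpos n hn
  · rw [← hinv, invert_apply]
    exact hpos (-n) (by omega)

end LaurentPolynomial

namespace Module.Basis

variable {ι R M : Type*} [Semiring R] [AddCommMonoid M] [Module R M]

theorem repr_semilinearMap_apply {σ : R →+* R} (b : Basis ι R M) (f : M →ₛₗ[σ] M)
    (hf : ∀ i, f (b i) = b i) (a : M) (i : ι) : b.repr (f a) i = σ (b.repr a i) := by
  classical
  rw [← b.linearCombination_repr a]
  induction b.repr a using Finsupp.induction_linear with
  | zero => simp
  | add p q hp hq => simp [hp, hq]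
  | single j c => simp [hf, Finsupp.single_apply, apply_ite σ]

theorem repr_apply_eq_of_triangular {α : Type*} [Preorder α] (b c : Basis ι R M) (f : ι → α)
    (hdiag : ∀ z, b.repr (c z) z = 1)
    (hoff : ∀ z u, u ≠ z → b.repr (c z) u ≠ 0 → f u < f z)
    {a : M} {u : ι} (hmax : ∀ z ∈ (c.repr a).support, f z ≤ f u) :
    b.repr a u = c.repr a u := by
  conv_lhs => rw [← c.linearCombination_repr a]
  rw [Finsupp.linearCombination_apply, Finsupp.sum, map_sum, Finsupp.finsetSum_apply,
    Finset.sum_eq_single u]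
  · simp [hdiag]
  · intro z hz hzu
    have : b.repr (c z) u = 0 := by
      by_contra hne
      exact (hoff z u (Ne.symm hzu) hne).not_ge (hmax z hz)
    simp [this]
  · simp_all

end Module.Basis

section KazhdanLusztig

open Module

variable {R ι M : Type*} [CommSemiring R] [AddCommMonoid M] [Module R[T;T⁻¹] M]
  (Hb Cb : Basis ι R[T;T⁻¹] M)

theorem eq_zero_of_bar_invariant_of_coeff_nonpos {α : Type*} [LinearOrder α] (f : ι → α)
    (hdiag : ∀ z, Hb.repr (Cb z) z = 1)
    (hoff : ∀ z u, u ≠ z → Hb.repr (Cb z) u ≠ 0 → f u < f z)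
    (d : M →ₛₗ[(invert (R := R) : R[T;T⁻¹] →+* R[T;T⁻¹])] M)
    (hd : ∀ z, d (Cb z) = Cb z)
    {E : M} (hE : d E = E) (hpos : ∀ x, ∀ n ≤ 0, (Hb.repr E x).coeff n = 0) : E = 0 := by
  by_contra hE0
  obtain ⟨u, hu, hmax⟩ := (Cb.repr E).support.exists_max_image f (by simpa using hE0)
  have hrepr : Hb.repr E u = Cb.repr E u := Hb.repr_apply_eq_of_triangular Cb f hdiag hoff hmax
  have hinv : invert (Cb.repr E u) = Cb.repr E u := by
    simpa [hE] using (Cb.repr_semilinearMap_apply d hd E u).symm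
  exact Finsupp.mem_support_iff.mp hu (eq_zero_of_invert_eq_self hinv (hrepr ▸ hpos u))

theorem coeff_repr_of_nonpos [DecidableEq ι] (c : ι → M) (hdiag : ∀ z, Hb.repr (c z) z = 1)
    (hpos : ∀ z x, x ≠ z → ∀ n ≤ 0, (Hb.repr (c z) x).coeff n = 0) (z x : ι) {n : ℤ}
    (hn : n ≤ 0) : (Hb.repr (c z) x).coeff n = if x = z ∧ n = 0 then 1 else 0 := by
  by_cases hxz : x = z
  · subst hxz
    rw [hdiag, ← T_zero, T_apply]
    simp [eq_comm]
  · rw [hpos z x hxz n hn, if_neg fun h => hxz h.1]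

end KazhdanLusztig

section HeckeAlgebra

open Module

variable {B W : Type} [Group W] {M : CoxeterMatrix B} (cs : CoxeterSystem M W)
  {HH : Type} [Ring HH] [Algebra ℤ[T;T⁻¹] HH] (Hb : Basis W ℤ[T;T⁻¹] HH)

noncomputable def klSimple (s : W) : HH := Hb s + (T 1 : ℤ[T;T⁻¹]) • 1

open scoped Classical in
noncomputable def leftDescentSign (i : B) (x : W) : ℤ := if cs.IsLeftDescent x i then -1 else 1

theorem klSimple_mul_basis
    (Hb_mul : ∀ (i : B) (u : W), cs.length (cs.simple i * u) = cs.length u + 1 →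
      Hb (cs.simple i) * Hb u = Hb (cs.simple i * u))
    (Hb_mul' : ∀ (i : B) (u : W), cs.length (cs.simple i * u) + 1 = cs.length u →
      Hb (cs.simple i) * Hb u = Hb (cs.simple i * u) + (T (-1) - T 1 : ℤ[T;T⁻¹]) • Hb u)
    (i : B) (u : W) :
    klSimple Hb (cs.simple i) * Hb u
      = Hb (cs.simple i * u) + (T (leftDescentSign cs i u) : ℤ[T;T⁻¹]) • Hb u := by
  rw [klSimple, leftDescentSign, add_mul, smul_mul_assoc, one_mul]
  split_ifs with hu
  · rw [Hb_mul' i u (cs.isLeftDescent_iff.mp hu), add_assoc, ← add_smul, sub_add_cancel]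
  · rw [Hb_mul i u (cs.not_isLeftDescent_iff.mp hu)]

variable {cs Hb} {i : B}

theorem repr_klSimple_mul
    (hmul : ∀ u, klSimple Hb (cs.simple i) * Hb u
      = Hb (cs.simple i * u) + (T (leftDescentSign cs i u) : ℤ[T;T⁻¹]) • Hb u)
    (a : HH) (x : W) :
    Hb.repr (klSimple Hb (cs.simple i) * a) x
      = T (leftDescentSign cs i x) * Hb.repr a x + Hb.repr a (cs.simple i * x) := by
  classical
  have hlin : Finsupp.lapply x ∘ₗ Hb.repr.toLinearMap
        ∘ₗ LinearMap.mulLeft ℤ[T;T⁻¹] (klSimple Hb (cs.simple i))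
      = (T (leftDescentSign cs i x) : ℤ[T;T⁻¹])
          • (Finsupp.lapply x ∘ₗ Hb.repr.toLinearMap)
        + Finsupp.lapply (cs.simple i * x) ∘ₗ Hb.repr.toLinearMap := by
    refine Hb.ext fun u => ?_
    have hsx : cs.simple i * u = x ↔ u = cs.simple i * x := by
      rw [← eq_inv_mul_iff_mul_eq, cs.inv_simple]
    simp only [LinearMap.comp_apply, LinearMap.mulLeft_apply, hmul, LinearMap.add_apply,
      LinearMap.smul_apply, LinearEquiv.coe_coe, map_add, map_smul, Hb.repr_self,
      Finsupp.lapply_apply, Finsupp.single_apply, hsx]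
    split_ifs <;> simp_all [add_comm]
  exact LinearMap.congr_fun hlin a

theorem bar_klSimple
    (hmul : ∀ u, klSimple Hb (cs.simple i) * Hb u
      = Hb (cs.simple i * u) + (T (leftDescentSign cs i u) : ℤ[T;T⁻¹]) • Hb u)
    (Hb_one : Hb 1 = 1) (d : HH →+* HH)
    (d_semilinear : ∀ (p : ℤ[T;T⁻¹]) (a : HH), d (p • a) = invert p • d a)
    (d_simple : Hb (cs.simple i) * d (Hb (cs.simple i)) = 1) :
    d (klSimple Hb (cs.simple i)) = klSimple Hb (cs.simple i) := by
  set K := klSimple Hb (cs.simple i)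
  have hdesc : cs.IsLeftDescent (cs.simple i) i := by simp [CoxeterSystem.IsLeftDescent]
  have hK : (K - (T (-1) : ℤ[T;T⁻¹]) • 1) * Hb (cs.simple i) = 1 := by
    rw [sub_mul, hmul, leftDescentSign, if_pos hdesc, cs.simple_mul_simple_self, Hb_one,
      smul_mul_assoc, one_mul, add_sub_cancel_right]
  have hd : d (Hb (cs.simple i)) = K - (T (-1) : ℤ[T;T⁻¹]) • 1 := by
    calc d (Hb (cs.simple i))
        = (K - (T (-1) : ℤ[T;T⁻¹]) • 1) * Hb (cs.simple i) * d (Hb (cs.simple i)) := by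
          rw [hK, one_mul]
      _ = K - (T (-1) : ℤ[T;T⁻¹]) • 1 := by rw [mul_assoc, d_simple, mul_one]
  calc d K = d (Hb (cs.simple i) + (T 1 : ℤ[T;T⁻¹]) • 1) := rfl
    _ = d (Hb (cs.simple i)) + (T (-1) : ℤ[T;T⁻¹]) • 1 := by
        rw [map_add, d_semilinear, invert_T, map_one]
    _ = K := by rw [hd, sub_add_cancel]

open scoped Classical in
theorem coeff_klRecursion_of_nonpos (C : W → HH)
    (C_self : ∀ u : W, Hb.repr (C u) u = 1)
    (C_pos : ∀ u x : W, x ≠ u → ∀ n : ℤ, n ≤ 0 → (Hb.repr (C u) x).coeff n = 0)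
    {w : W} (hw : cs.IsLeftDescent w i) (y : W) {n : ℤ} (hn : n ≤ 0) :
    (T (leftDescentSign cs i y) * Hb.repr (C (cs.simple i * w)) y
        + Hb.repr (C (cs.simple i * w)) (cs.simple i * y)
        - ∑ z ∈ (Hb.repr (C (cs.simple i * w))).support.filter
            (fun z => cs.bruhatLT (cs.simple i * z) z),
            (Hb.repr (C (cs.simple i * w)) z).coeff 1 • Hb.repr (C z) y).coeff n
      = (Hb.repr (C w) y).coeff n := by
  have hpoly := coeff_repr_of_nonpos Hb C C_self C_pos
  simp only [AddMonoidAlgebra.coeff_sub, AddMonoidAlgebra.coeff_add, Finsupp.sub_apply,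
    Finsupp.add_apply, coeff_T_mul, AddMonoidAlgebra.coeff_sum, Finsupp.finsetSum_apply,
    AddMonoidAlgebra.coeff_smul_apply, hpoly _ _ hn, mul_right_inj]
  rw [add_sub_right_comm, add_eq_right, sub_eq_zero]
  simp only [smul_eq_mul, mul_ite, mul_one, mul_zero, ite_and, Finset.sum_ite_eq,
    Finset.mem_filter, Finsupp.mem_support_iff, cs.bruhatLT_simple_mul_self_iff]
  by_cases hy : cs.IsLeftDescent y i
  · rw [leftDescentSign, if_pos hy]
    rcases hn.lt_or_eq with hn | rfl
    · have hy_sw : y ≠ cs.simple i * w := fun h =>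
        cs.isLeftDescent_iff_not_isLeftDescent_mul.mp hw (h ▸ hy)
      rw [hpoly _ _ (by omega)]
      simp [hy_sw, hn.ne]
    · by_cases h0 : Hb.repr (C (cs.simple i * w)) y = 0 <;> simp [h0, hy]
  · rw [leftDescentSign, if_neg hy, hpoly _ _ (by omega)]
    simp [hy]
    omega

end HeckeAlgebra

open scoped Classical in
theorem kl_polynomial_recursion_general
    {B W : Type} [Group W] {M : CoxeterMatrix B} (cs : CoxeterSystem M W)
    -- the Hecke algebra of (W,S), a ℤ[v,v⁻¹]-algebra
    (HH : Type) [Ring HH] [Algebra (LaurentPolynomial ℤ) HH]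
    -- its standard basis {H_w : w ∈ W}
    (Hb : Module.Basis W (LaurentPolynomial ℤ) HH)
    (Hb_one : Hb 1 = 1)
    (Hb_mul : ∀ (i : B) (u : W), cs.length (cs.simple i * u) = cs.length u + 1 →
      Hb (cs.simple i) * Hb u = Hb (cs.simple i * u))
    (Hb_mul' : ∀ (i : B) (u : W), cs.length (cs.simple i * u) + 1 = cs.length u →
      Hb (cs.simple i) * Hb u
        = Hb (cs.simple i * u) + ((T (-1) - T 1 : LaurentPolynomial ℤ)) • Hb u)
    -- the bar involution d of H
    (d : HH →+* HH)
    (d_semilinear : ∀ (p : LaurentPolynomial ℤ) (a : HH),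
      d (p • a) = (LaurentPolynomial.invert p) • d a)
    (d_H : ∀ u : W, d (Hb u) * Hb u⁻¹ = 1 ∧ Hb u⁻¹ * d (Hb u) = 1)
    -- the Kazhdan–Lusztig basis {H̱_w}; the Kazhdan–Lusztig polynomial h_{x,w}
    -- is the coordinate (Hb.repr (C w)) x, and μ(x,w) is its coefficient of v
    (C : W → HH)
    (Cb : Module.Basis W (LaurentPolynomial ℤ) HH) (hCb : ∀ u : W, Cb u = C u)
    (C_bar : ∀ u : W, d (C u) = C u)
    (C_self : ∀ u : W, Hb.repr (C u) u = 1)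
    (C_supp : ∀ u x : W, x ≠ u → Hb.repr (C u) x ≠ 0 → cs.bruhatLT x u)
    (C_pos : ∀ u x : W, x ≠ u → ∀ n : ℤ, n ≤ 0 → (Hb.repr (C u) x).coeff n = 0)
    -- the data of the statement: w ∈ W, s ∈ S with sw < w, and x < w
    (w : W) (i : B) (hsw : cs.bruhatLT (cs.simple i * w) w)
    (x : W) :
    -- if x < sx : h_{x,w} = v h_{x,sw} + h_{sx,sw} − Σ_{sz<z<sw} μ(z,sw) h_{x,z}
    (cs.bruhatLT x (cs.simple i * x) →
      Hb.repr (C w) x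
        = T 1 * Hb.repr (C (cs.simple i * w)) x
          + Hb.repr (C (cs.simple i * w)) (cs.simple i * x)
          - ∑ z ∈ ((Hb.repr (C (cs.simple i * w))).support.filter
              (fun z => cs.bruhatLT (cs.simple i * z) z)),
              ((Hb.repr (C (cs.simple i * w)) z).coeff 1) • Hb.repr (C z) x) ∧
    -- if x > sx : h_{x,w} = v⁻¹ h_{x,sw} + h_{sx,sw} − Σ_{sz<z<sw} μ(z,sw) h_{x,z}
    (cs.bruhatLT (cs.simple i * x) x →
      Hb.repr (C w) x
        = T (-1) * Hb.repr (C (cs.simple i * w)) x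
          + Hb.repr (C (cs.simple i * w)) (cs.simple i * x)
          - ∑ z ∈ ((Hb.repr (C (cs.simple i * w))).support.filter
              (fun z => cs.bruhatLT (cs.simple i * z) z)),
              ((Hb.repr (C (cs.simple i * w)) z).coeff 1) • Hb.repr (C z) x) := by
  obtain rfl : C = ⇑Cb := funext fun u => (hCb u).symm
  have hmul := klSimple_mul_basis cs Hb Hb_mul Hb_mul' i
  set X := klSimple Hb (cs.simple i) * Cb (cs.simple i * w)
    - ∑ z ∈ (Hb.repr (Cb (cs.simple i * w))).support.filter
        (fun z => cs.bruhatLT (cs.simple i * z) z),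
        (Hb.repr (Cb (cs.simple i * w)) z).coeff 1 • Cb z with hX_def
  have hX_repr : ∀ y, Hb.repr X y
      = T (leftDescentSign cs i y) * Hb.repr (Cb (cs.simple i * w)) y
        + Hb.repr (Cb (cs.simple i * w)) (cs.simple i * y)
        - ∑ z ∈ (Hb.repr (Cb (cs.simple i * w))).support.filter
            (fun z => cs.bruhatLT (cs.simple i * z) z),
            (Hb.repr (Cb (cs.simple i * w)) z).coeff 1 • Hb.repr (Cb z) y := by
    intro y
    simp only [hX_def, map_sub, map_sum, map_zsmul, Finsupp.sub_apply, Finsupp.finsetSum_apply,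
      Finsupp.smul_apply, repr_klSimple_mul hmul]
  have hd_simple : Hb (cs.simple i) * d (Hb (cs.simple i)) = 1 := by
    simpa [cs.inv_simple] using (d_H (cs.simple i)).2
  have hX_bar : d X = X := by
    simp only [hX_def, map_sub, map_mul, map_sum, map_zsmul, C_bar,
      bar_klSimple hmul Hb_one d d_semilinear hd_simple]
  let dσ : HH →ₛₗ[(invert (R := ℤ) : ℤ[T;T⁻¹] →+* ℤ[T;T⁻¹])] HH :=
    { toFun := d, map_add' := map_add d, map_smul' := d_semilinear }
  have hX : X = Cb w := by
    refine sub_eq_zero.mp <| eq_zero_of_bar_invariant_of_coeff_nonpos Hb Cb cs.length C_self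
      (fun z u hu h => cs.length_lt_of_bruhatLT (C_supp z u hu h)) dσ C_bar
      (show d (X - Cb w) = X - Cb w by rw [map_sub, hX_bar, C_bar]) fun y n hn => ?_
    rw [map_sub, Finsupp.sub_apply, AddMonoidAlgebra.coeff_sub, Finsupp.sub_apply, hX_repr,
      coeff_klRecursion_of_nonpos Cb C_self C_pos (cs.bruhatLT_simple_mul_self_iff.mp hsw) y hn,
      sub_self]
  refine ⟨fun hx => ?_, fun hx => ?_⟩
  · rw [← hX, hX_repr, leftDescentSign, if_neg (cs.bruhatLT_self_simple_mul_iff.mp hx)]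
  · rw [← hX, hX_repr, leftDescentSign, if_pos (cs.bruhatLT_simple_mul_self_iff.mp hx)]

open scoped Classical in
theorem kl_polynomial_recursion
    {B W : Type} [Group W] {M : CoxeterMatrix B} (cs : CoxeterSystem M W)
    -- the Hecke algebra of (W,S), a ℤ[v,v⁻¹]-algebra
    (HH : Type) [Ring HH] [Algebra (LaurentPolynomial ℤ) HH]
    -- its standard basis {H_w : w ∈ W}
    (Hb : Module.Basis W (LaurentPolynomial ℤ) HH)
    (Hb_one : Hb 1 = 1)
    (Hb_mul : ∀ (i : B) (u : W), cs.length (cs.simple i * u) = cs.length u + 1 →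
      Hb (cs.simple i) * Hb u = Hb (cs.simple i * u))
    (Hb_mul' : ∀ (i : B) (u : W), cs.length (cs.simple i * u) + 1 = cs.length u →
      Hb (cs.simple i) * Hb u
        = Hb (cs.simple i * u) + ((T (-1) - T 1 : LaurentPolynomial ℤ)) • Hb u)
    -- the bar involution d of H
    (d : HH →+* HH)
    (d_invol : Function.Involutive d)
    (d_semilinear : ∀ (p : LaurentPolynomial ℤ) (a : HH),
      d (p • a) = (LaurentPolynomial.invert p) • d a)
    (d_H : ∀ u : W, d (Hb u) * Hb u⁻¹ = 1 ∧ Hb u⁻¹ * d (Hb u) = 1)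
    -- the Kazhdan–Lusztig basis {H̱_w}; the Kazhdan–Lusztig polynomial h_{x,w}
    -- is the coordinate (Hb.repr (C w)) x, and μ(x,w) is its coefficient of v
    (C : W → HH)
    (Cb : Module.Basis W (LaurentPolynomial ℤ) HH) (hCb : ∀ u : W, Cb u = C u)
    (C_bar : ∀ u : W, d (C u) = C u)
    (C_self : ∀ u : W, Hb.repr (C u) u = 1)
    (C_supp : ∀ u x : W, x ≠ u → Hb.repr (C u) x ≠ 0 → cs.bruhatLT x u)
    (C_pos : ∀ u x : W, x ≠ u → ∀ n : ℤ, n ≤ 0 → (Hb.repr (C u) x).coeff n = 0)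
    -- the data of the statement: w ∈ W, s ∈ S with sw < w, and x < w
    (w : W) (i : B) (hsw : cs.bruhatLT (cs.simple i * w) w)
    (x : W) (hxw : cs.bruhatLT x w) :
    -- if x < sx : h_{x,w} = v h_{x,sw} + h_{sx,sw} − Σ_{sz<z<sw} μ(z,sw) h_{x,z}
    (cs.bruhatLT x (cs.simple i * x) →
      Hb.repr (C w) x
        = T 1 * Hb.repr (C (cs.simple i * w)) x
          + Hb.repr (C (cs.simple i * w)) (cs.simple i * x)
          - ∑ z ∈ ((Hb.repr (C (cs.simple i * w))).support.filter
              (fun z => cs.bruhatLT (cs.simple i * z) z)),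
              ((Hb.repr (C (cs.simple i * w)) z).coeff 1) • Hb.repr (C z) x) ∧
    -- if x > sx : h_{x,w} = v⁻¹ h_{x,sw} + h_{sx,sw} − Σ_{sz<z<sw} μ(z,sw) h_{x,z}
    (cs.bruhatLT (cs.simple i * x) x →
      Hb.repr (C w) x
        = T (-1) * Hb.repr (C (cs.simple i * w)) x
          + Hb.repr (C (cs.simple i * w)) (cs.simple i * x)
          - ∑ z ∈ ((Hb.repr (C (cs.simple i * w))).support.filter
              (fun z => cs.bruhatLT (cs.simple i * z) z)),
              ((Hb.repr (C (cs.simple i * w)) z).coeff 1) • Hb.repr (C z) x) :=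
  kl_polynomial_recursion_general cs HH Hb Hb_one Hb_mul Hb_mul' d d_semilinear d_H C Cb hCb C_bar
    C_self C_supp C_pos w i hsw x
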